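/- arXiv:2007.12827 — 7 statements merged into one kernel-verified Lean document; each statement's English description precedes it below -/
import Mathlib

section
/- For 0 < r < 1, the function φ(r) = log(1/(1-r)) - 2·artanh(r)/r is strictly increasing on (0,1). -/
/-- Inverse hyperbolic tangent: artanh r = (1/2) log((1+r)/(1-r)). -/
noncomputable def artanh (r : ℝ) : ℝ := (1 / 2) * Real.log ((1 + r) / (1 - r))

theorem stmt_0 :
    StrictMonoOn (fun r : ℝ => Real.log (1 / (1 - r)) - 2 * artanh r / r)
      (Set.Ioo (0 : ℝ) 1) := by
  set g : ℝ → ℝ := fun r => -Real.log (1 - r) - (Real.log (1 + r) - Real.log (1 - r)) * r⁻¹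
    with hgdef
  have hd : ∀ x ∈ Set.Ioo (0 : ℝ) 1, HasDerivAt g
      (-(-1 / (1 - x)) - ((1 / (1 + x) - -1 / (1 - x)) * x⁻¹ +
        (Real.log (1 + x) - Real.log (1 - x)) * (-(x ^ 2)⁻¹))) x := by
    intro x hx
    obtain ⟨hx0, hx1⟩ := hx
    have h1m : (0:ℝ) < 1 - x := by linarith
    have h1p : (0:ℝ) < 1 + x := by linarith
    have hsub : HasDerivAt (fun r : ℝ => 1 - r) (-1) x := by
      simpa using (hasDerivAt_id x).const_sub 1
    have hadd : HasDerivAt (fun r : ℝ => 1 + r) 1 x := by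
      simpa using (hasDerivAt_id x).const_add 1
    have hlog1m : HasDerivAt (fun r : ℝ => Real.log (1 - r)) (-1 / (1 - x)) x :=
      hsub.log h1m.ne'
    have hlog1p : HasDerivAt (fun r : ℝ => Real.log (1 + r)) (1 / (1 + x)) x :=
      hadd.log h1p.ne'
    have hinv : HasDerivAt (fun r : ℝ => r⁻¹) (-(x ^ 2)⁻¹) x := by
      simpa using hasDerivAt_inv hx0.ne'
    exact hlog1m.neg.sub (((hlog1p.sub hlog1m).mul hinv))
  have hpos : ∀ x ∈ Set.Ioo (0 : ℝ) 1, (0:ℝ) <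
      (-(-1 / (1 - x)) - ((1 / (1 + x) - -1 / (1 - x)) * x⁻¹ +
        (Real.log (1 + x) - Real.log (1 - x)) * (-(x ^ 2)⁻¹))) := by
    intro x hx
    obtain ⟨hx0, hx1⟩ := hx
    have h1m : (0:ℝ) < 1 - x := by linarith
    have h1p : (0:ℝ) < 1 + x := by linarith
    set L := Real.log (1 + x) - Real.log (1 - x) with hL
    have hb1 : Real.log (1 - x) < -x := by
      have := Real.log_lt_sub_one_of_pos h1m (by linarith)
      linarith
    have hb2 : x / (1 + x) < Real.log (1 + x) := by
      have h := Real.log_lt_sub_one_of_pos (x := (1 + x)⁻¹) (by positivity)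
        (by
          intro h
          have : (1:ℝ) + x = 1 := by
            field_simp at h
            linarith
          linarith)
      rw [Real.log_inv] at h
      have : (1 + x)⁻¹ - 1 = -(x / (1 + x)) := by field_simp; ring
      rw [this] at h
      linarith
    have hLlow : x + x / (1 + x) < L := by rw [hL]; linarith
    have hnum : (0:ℝ) < x ^ 2 * (1 + x) + L * (1 - x ^ 2) - 2 * x := by
      have hx2 : (0:ℝ) < 1 - x ^ 2 := by nlinarith
      have h1 : (x + x / (1 + x)) * (1 - x ^ 2) < L * (1 - x ^ 2) := by
        exact mul_lt_mul_of_pos_right hLlow hx2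
      have h2 : (x + x / (1 + x)) * (1 - x ^ 2) = x * (1 - x ^ 2) + x * (1 - x) := by
        field_simp
        ring
      nlinarith
    have heq : (-(-1 / (1 - x)) - ((1 / (1 + x) - -1 / (1 - x)) * x⁻¹ +
        L * (-(x ^ 2)⁻¹))) =
        (x ^ 2 * (1 + x) + L * (1 - x ^ 2) - 2 * x) / (x ^ 2 * (1 - x) * (1 + x)) := by
      field_simp
      ring
    rw [heq]
    positivity
  have hgmono : StrictMonoOn g (Set.Ioo (0 : ℝ) 1) := by
    apply StrictMonoOn.mono (s := Set.Ioo (0:ℝ) 1) ?_ le_rfl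
    apply strictMonoOn_of_deriv_pos (convex_Ioo 0 1)
    · intro x hx
      exact ((hd x hx).differentiableAt).continuousAt.continuousWithinAt
    · intro x hx
      rw [interior_Ioo] at hx
      rw [(hd x hx).deriv]
      exact hpos x hx
  intro a ha b hb hab
  have hfg : ∀ x ∈ Set.Ioo (0:ℝ) 1,
      Real.log (1 / (1 - x)) - 2 * artanh x / x = g x := by
    intro x hx
    obtain ⟨hx0, hx1⟩ := hx
    have h1m : (0:ℝ) < 1 - x := by linarith
    have h1p : (0:ℝ) < 1 + x := by linarith
    simp only [hgdef, artanh, one_div, Real.log_inv, Real.log_div h1p.ne' h1m.ne']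
    ring
  simp only [hfg a ha, hfg b hb]
  exact hgmono ha hb hab
end

section
/- For 0 < r < 1, the function ψ(r) = -r(2+r) + 2(1+r)·artanh(r) is strictly positive, i.e., ψ(r) > 0 for all r ∈ (0,1). -/
theorem stmt_1 (r : ℝ) (hr : r ∈ Set.Ioo (0 : ℝ) 1) :
    0 < -r * (2 + r) + 2 * (1 + r) * artanh r := by
  obtain ⟨h0, h1⟩ := hr
  have h1r : (0:ℝ) < 1 - r := by linarith
  have h2r : (0:ℝ) < 1 + r := by linarith
  have ha : Real.log (1 - r) < -r := by
    have := Real.log_lt_sub_one_of_pos h1r (by intro h; nlinarith)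
    linarith
  have hb : r / (1 + r) < Real.log (1 + r) := by
    have h := Real.log_lt_sub_one_of_pos (show (0:ℝ) < (1+r)⁻¹ by positivity)
      (by
        intro h
        have : (1:ℝ) + r = 1 := by
          field_simp at h
          linarith
        linarith)
    rw [Real.log_inv] at h
    have he : (1+r)⁻¹ - 1 = -(r/(1+r)) := by field_simp; ring
    rw [he] at h
    linarith
  have hL : Real.log ((1+r)/(1-r)) = Real.log (1+r) - Real.log (1-r) :=
    Real.log_div (by linarith) (by linarith)
  unfold artanh
  rw [hL]
  have hb' : r < (1+r) * Real.log (1+r) := by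
    have := mul_lt_mul_of_pos_left hb h2r
    have hf : (1+r) * (r/(1+r)) = r := by field_simp
    linarith [hf ▸ this]
  have ha' : (1+r) * Real.log (1-r) < (1+r) * (-r) := mul_lt_mul_of_pos_left ha h2r
  nlinarith
end

section
/- For all r ∈ (0,1), the inequality 2·artanh(r)/r ≤ 2 + log(1/(1-r)) holds. -/
theorem stmt_2 (r : ℝ) (hr : r ∈ Set.Ioo (0 : ℝ) 1) :
    2 * artanh r / r ≤ 2 + Real.log (1 / (1 - r)) := by
  obtain ⟨h0, h1⟩ := hr
  have h1r : (0:ℝ) < 1 - r := by linarith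
  have h1p : (0:ℝ) < 1 + r := by linarith
  have hA : 2 * artanh r = Real.log (1 + r) - Real.log (1 - r) := by
    rw [artanh, Real.log_div (by positivity) (by positivity)]; ring
  have hB : Real.log (1 / (1 - r)) = -Real.log (1 - r) := by
    rw [one_div, Real.log_inv]
  have hlog1 : Real.log (1 + r) ≤ r := by
    have := Real.log_le_sub_one_of_pos h1p; linarith
  have hlog2 : -r ≤ (1 - r) * Real.log (1 - r) := by
    have h := Real.one_sub_inv_le_log_of_pos h1r
    have h2 := mul_le_mul_of_nonneg_left h h1r.le
    have h3 : (1 - r) * (1 - (1 - r)⁻¹) = -r := by field_simp; ring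
    linarith [h3 ▸ h2]
  rw [hB, div_le_iff₀ h0, hA]
  nlinarith [hlog1, hlog2]
end

section
/- For 0 < r < 1 and any θ ∈ [0, 2π], (1/π)·∫₀^{2π} |sin(t-θ)| / (1 + r² - 2r·cos(t-θ)) dt = (4/(π r))·artanh(r) = (2/(π r))·log((1+r)/(1-r)). -/
theorem stmt_3 (r θ : ℝ) (hr : r ∈ Set.Ioo (0 : ℝ) 1)
    (hθ : θ ∈ Set.Icc (0 : ℝ) (2 * Real.pi)) :
    (1 / Real.pi) *
        ∫ t in (0 : ℝ)..(2 * Real.pi),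
          |Real.sin (t - θ)| / (1 + r ^ 2 - 2 * r * Real.cos (t - θ)) =
      4 / (Real.pi * r) * artanh r ∧
    4 / (Real.pi * r) * artanh r =
      2 / (Real.pi * r) * Real.log ((1 + r) / (1 - r)) := by
  obtain ⟨hr0, hr1⟩ := hr
  have hrne : r ≠ 0 := ne_of_gt hr0
  have hπ : (0:ℝ) < Real.pi := Real.pi_pos
  set f : ℝ → ℝ := fun t => |Real.sin t| / (1 + r ^ 2 - 2 * r * Real.cos t) with hf
  have hD : ∀ t, 0 < 1 + r ^ 2 - 2 * r * Real.cos t := by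
    intro t
    nlinarith [Real.cos_le_one t, Real.neg_one_le_cos t, sq_nonneg (1 - r)]
  -- periodicity
  have hper : Function.Periodic f (2 * Real.pi) := by
    intro t
    simp [hf, Real.sin_add_two_pi, Real.cos_add_two_pi]
  -- shift
  have h1 : (∫ t in (0:ℝ)..(2 * Real.pi),
      |Real.sin (t - θ)| / (1 + r ^ 2 - 2 * r * Real.cos (t - θ)))
      = ∫ t in (0:ℝ)..(2 * Real.pi), f t := by
    have := intervalIntegral.integral_comp_sub_right f θ (a := 0) (b := 2 * Real.pi)
    rw [show (0:ℝ) - θ = -θ by ring] at this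
    rw [this]
    have h2 := hper.intervalIntegral_add_eq (-θ) 0
    rw [show -θ + 2 * Real.pi = 2 * Real.pi - θ by ring, zero_add] at h2
    exact h2
  -- the halves
  have key : ∀ t : ℝ, HasDerivAt (fun t => (1 / (2 * r)) * Real.log (1 + r ^ 2 - 2 * r * Real.cos t))
      (Real.sin t / (1 + r ^ 2 - 2 * r * Real.cos t)) t := by
    intro t
    have h1 : HasDerivAt (fun t => 1 + r ^ 2 - 2 * r * Real.cos t) (2 * r * Real.sin t) t := by
      have := ((Real.hasDerivAt_cos t).const_mul (2 * r)).const_sub (1 + r ^ 2)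
      exact this.congr_deriv (by ring)
    have h2 := (h1.log (ne_of_gt (hD t))).const_mul (1 / (2 * r))
    exact h2.congr_deriv (by field_simp)
  have half : (∫ t in (0:ℝ)..Real.pi, Real.sin t / (1 + r ^ 2 - 2 * r * Real.cos t))
      = (1 / (2 * r)) * Real.log (1 + r ^ 2 + 2 * r)
        - (1 / (2 * r)) * Real.log (1 + r ^ 2 - 2 * r) := by
    have hcont : ContinuousOn (fun t => Real.sin t / (1 + r ^ 2 - 2 * r * Real.cos t))
        (Set.uIcc 0 Real.pi) := by
      apply ContinuousOn.div (Real.continuous_sin.continuousOn)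
      · fun_prop
      · intro x _; exact ne_of_gt (hD x)
    have := intervalIntegral.integral_eq_sub_of_hasDerivAt
      (fun t _ => key t) (hcont.intervalIntegrable)
    rw [this]
    simp [Real.cos_pi, Real.cos_zero]
  have habs1 : (∫ t in (0:ℝ)..Real.pi, f t)
      = ∫ t in (0:ℝ)..Real.pi, Real.sin t / (1 + r ^ 2 - 2 * r * Real.cos t) := by
    apply intervalIntegral.integral_congr
    intro t ht
    rw [Set.uIcc_of_le Real.pi_pos.le] at ht
    simp [hf, abs_of_nonneg (Real.sin_nonneg_of_nonneg_of_le_pi ht.1 ht.2)]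
  have habs2 : (∫ t in Real.pi..(2 * Real.pi), f t)
      = ∫ t in (0:ℝ)..Real.pi, Real.sin t / (1 + r ^ 2 - 2 * r * Real.cos t) := by
    have hsub := intervalIntegral.integral_comp_sub_left
      (fun t => -Real.sin t / (1 + r ^ 2 - 2 * r * Real.cos t)) (2 * Real.pi)
      (a := 0) (b := Real.pi)
    rw [show 2 * Real.pi - Real.pi = Real.pi by ring, show 2 * Real.pi - 0 = 2 * Real.pi by ring]
      at hsub
    have e0 : (∫ t in Real.pi..(2 * Real.pi), f t)
        = ∫ t in Real.pi..(2 * Real.pi), -Real.sin t / (1 + r ^ 2 - 2 * r * Real.cos t) := by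
      apply intervalIntegral.integral_congr
      intro t ht
      rw [Set.uIcc_of_le (by linarith : Real.pi ≤ 2 * Real.pi)] at ht
      have hs : Real.sin t ≤ 0 := by
        have : Real.sin t = -Real.sin (t - Real.pi) := by
          rw [show t = (t - Real.pi) + Real.pi by ring, Real.sin_add_pi]
          ring_nf
        rw [this, neg_nonpos]
        exact Real.sin_nonneg_of_nonneg_of_le_pi (by linarith [ht.1]) (by linarith [ht.2])
      simp [hf, abs_of_nonpos hs]
    rw [e0, ← hsub]
    apply intervalIntegral.integral_congr
    intro t _
    simp only
    rw [show 2 * Real.pi - t = -t + 2 * Real.pi by ring, Real.sin_add_two_pi,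
      Real.cos_add_two_pi, Real.sin_neg, Real.cos_neg, neg_neg]
  -- combine
  have hsplit : (∫ t in (0:ℝ)..(2 * Real.pi), f t)
      = (∫ t in (0:ℝ)..Real.pi, f t) + ∫ t in Real.pi..(2 * Real.pi), f t := by
    have hcf : Continuous f := by
      apply Continuous.div (continuous_abs.comp Real.continuous_sin)
      · fun_prop
      · intro x; exact ne_of_gt (hD x)
    exact (intervalIntegral.integral_add_adjacent_intervals
      (hcf.intervalIntegrable _ _) (hcf.intervalIntegrable _ _)).symm
  have hlog : Real.log (1 + r ^ 2 + 2 * r) - Real.log (1 + r ^ 2 - 2 * r)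
      = 2 * Real.log ((1 + r) / (1 - r)) := by
    have h1p : (0:ℝ) < 1 + r := by linarith
    have h1m : (0:ℝ) < 1 - r := by linarith
    rw [show 1 + r ^ 2 + 2 * r = (1 + r) ^ 2 by ring,
      show 1 + r ^ 2 - 2 * r = (1 - r) ^ 2 by ring,
      Real.log_pow, Real.log_pow, Real.log_div (ne_of_gt h1p) (ne_of_gt h1m)]
    push_cast
    ring
  constructor
  · rw [h1, hsplit, habs1, habs2, half, artanh]
    field_simp
    rw [hlog]; ring
  · rw [artanh]; ring
end

section
/- For p ≥ 1, the quantity C(p) := ∫₀¹ ((2/(π r))·log((1+r)/(1-r)))^p · r dr satisfies C(p) ≤ (4^{p-1}/π^p) · (2^p + (2 - 2^{-p})·Γ(1+p)). -/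
open MeasureTheory Set

/-- Unweighted power mean inequality for reals. -/
lemma aux_rpow_add_le (a b : ℝ) (ha : 0 ≤ a) (hb : 0 ≤ b) {p : ℝ} (hp : 1 ≤ p) :
    (a + b) ^ p ≤ 2 ^ (p - 1) * (a ^ p + b ^ p) := by
  have h := NNReal.coe_le_coe.2 (NNReal.rpow_add_le_mul_rpow_add_rpow a.toNNReal b.toNNReal hp)
  push_cast at h
  rwa [Real.coe_toNNReal a ha, Real.coe_toNNReal b hb] at h

lemma aux_exp_image : (fun t : ℝ => Real.exp (-t)) '' (Ioi 0) = Ioo (0:ℝ) 1 := by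
  ext x
  constructor
  · rintro ⟨t, ht, rfl⟩
    exact ⟨Real.exp_pos _, by
      have : (-t) < 0 := neg_neg_of_pos ht
      simpa using Real.exp_lt_one_iff.2 this⟩
  · rintro ⟨hx0, hx1⟩
    exact ⟨-Real.log x, by simpa using Real.log_neg hx0 hx1, by
      simp [Real.exp_log hx0]⟩

lemma aux_intr (p r : ℝ) (hp : 0 ≤ p) (hr : 1 ≤ r) :
    IntegrableOn (fun t : ℝ => t ^ p * Real.exp (-(r * t))) (Ioi 0) := by
  have h := Real.GammaIntegral_convergent (show (0:ℝ) < p + 1 by linarith)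
  refine h.mono' ?_ ?_
  · refine (Measurable.aestronglyMeasurable ?_)
    fun_prop
  · filter_upwards [self_mem_ae_restrict (measurableSet_Ioi : MeasurableSet (Ioi (0:ℝ)))]
      with t ht
    have ht0 : (0:ℝ) < t := ht
    have h1 : t ^ p * Real.exp (-(r * t)) ≤ t ^ p * Real.exp (-t) := by
      apply mul_le_mul_of_nonneg_left _ (Real.rpow_nonneg ht0.le p)
      apply Real.exp_le_exp.2
      nlinarith
    have h2 : 0 ≤ t ^ p * Real.exp (-(r * t)) := by positivity
    rw [Real.norm_eq_abs, abs_of_nonneg h2, add_sub_cancel_right]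
    linarith [h1]

lemma aux_G (p : ℝ) (hp : 0 < p) :
    IntegrableOn (fun s : ℝ => (-Real.log s) ^ p * (1 - s)) (Ioo 0 1) ∧
    ∫ s in Ioo (0:ℝ) 1, (-Real.log s) ^ p * (1 - s)
      = (1 - (1/2) ^ (p+1)) * Real.Gamma (p+1) := by
  have hderiv : ∀ t ∈ Ioi (0:ℝ),
      HasDerivWithinAt (fun t : ℝ => Real.exp (-t)) (-Real.exp (-t)) (Ioi 0) t := by
    intro t _
    have := ((Real.hasDerivAt_exp (-t)).comp t (hasDerivAt_neg t))
    simpa [mul_comm, Function.comp_def] using this.hasDerivWithinAt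
  have hinj : InjOn (fun t : ℝ => Real.exp (-t)) (Ioi 0) :=
    (Real.exp_injective.comp neg_injective).injOn
  have hcongr : ∀ t ∈ Ioi (0:ℝ),
      |(-Real.exp (-t))| • ((fun s : ℝ => (-Real.log s) ^ p * (1 - s)) (Real.exp (-t)))
        = t ^ p * Real.exp (-(1 * t)) - t ^ p * Real.exp (-(2 * t)) := by
    intro t ht
    have ht0 : (0:ℝ) < t := ht
    simp only [smul_eq_mul, abs_neg, abs_of_pos (Real.exp_pos _), Real.log_exp, neg_neg]
    rw [show -(2*t) = -t + -t by ring, Real.exp_add, one_mul]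
    ring
  constructor
  · rw [← aux_exp_image,
      integrableOn_image_iff_integrableOn_abs_deriv_smul measurableSet_Ioi hderiv hinj]
    refine (((aux_intr p 1 hp.le le_rfl).sub (aux_intr p 2 hp.le one_le_two)).congr ?_)
    filter_upwards [self_mem_ae_restrict (measurableSet_Ioi : MeasurableSet (Ioi (0:ℝ)))]
      with t ht
    exact (hcongr t ht).symm
  · rw [← aux_exp_image,
      integral_image_eq_integral_abs_deriv_smul measurableSet_Ioi hderiv hinj,
      setIntegral_congr_fun measurableSet_Ioi hcongr,
      integral_sub (aux_intr p 1 hp.le le_rfl) (aux_intr p 2 hp.le one_le_two)]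
    have h1 := Real.integral_rpow_mul_exp_neg_mul_Ioi (show (0:ℝ) < p+1 by linarith) one_pos
    have h2 := Real.integral_rpow_mul_exp_neg_mul_Ioi (show (0:ℝ) < p+1 by linarith) two_pos
    rw [add_sub_cancel_right] at h1 h2
    rw [h1, h2]
    norm_num
    ring

lemma aux_ptwise (p : ℝ) (hp : 1 ≤ p) (r : ℝ) (hr : r ∈ Icc (0:ℝ) 1) :
    (2 / (Real.pi * r) * Real.log ((1 + r) / (1 - r))) ^ p * r ≤
      (2/Real.pi)^p * 2^(p-1) * 2^p * r
        + (2/Real.pi)^p * 2^(p-1) * ((-Real.log (1-r))^p * (1-(1-r))) := by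
  obtain ⟨hr0, hr1⟩ := hr
  rcases eq_or_lt_of_le hr0 with h0 | h0
  · simp [← h0]
  rcases eq_or_lt_of_le hr1 with h1 | h1
  · subst h1
    norm_num
    rw [Real.zero_rpow (by linarith : p ≠ 0), mul_zero, add_zero]
    positivity
  have hπ := Real.pi_pos
  have h1r : (0:ℝ) < 1 - r := by linarith
  have h1p : (0:ℝ) < 1 + r := by linarith
  set L : ℝ := -Real.log (1 - r) with hLdef
  have hL0 : 0 ≤ L := by
    rw [hLdef, neg_nonneg]
    exact Real.log_nonpos (by linarith) (by linarith)
  have hlog : Real.log ((1 + r) / (1 - r)) ≤ r * (2 + L) := by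
    rw [Real.log_div h1p.ne' h1r.ne']
    have e1 : Real.log (1 + r) ≤ r := by
      have := Real.log_le_sub_one_of_pos h1p; linarith
    have e2 : L * (1 - r) ≤ r := by
      have h3 := Real.log_le_sub_one_of_pos (inv_pos.2 h1r)
      rw [Real.log_inv] at h3
      have h4 : ((1 - r)⁻¹ - 1) * (1 - r) = r := by field_simp; ring
      calc L * (1 - r) ≤ ((1 - r)⁻¹ - 1) * (1 - r) :=
            mul_le_mul_of_nonneg_right h3 h1r.le
        _ = r := h4
    nlinarith [e2]
  have hc : 0 < 2 / (Real.pi * r) := by positivity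
  have hbase : 2 / (Real.pi * r) * Real.log ((1 + r) / (1 - r))
      ≤ 2 / Real.pi * (2 + L) := by
    calc 2 / (Real.pi * r) * Real.log ((1 + r) / (1 - r))
        ≤ 2 / (Real.pi * r) * (r * (2 + L)) := mul_le_mul_of_nonneg_left hlog hc.le
      _ = 2 / Real.pi * (2 + L) := by field_simp
  have hbase0 : 0 ≤ 2 / (Real.pi * r) * Real.log ((1 + r) / (1 - r)) := by
    apply mul_nonneg hc.le
    apply Real.log_nonneg
    rw [le_div_iff₀ h1r]
    linarith
  have hpow : (2 / (Real.pi * r) * Real.log ((1 + r) / (1 - r))) ^ p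
      ≤ (2/Real.pi)^p * 2^(p-1) * (2^p + L^p) := by
    calc (2 / (Real.pi * r) * Real.log ((1 + r) / (1 - r))) ^ p
        ≤ (2 / Real.pi * (2 + L)) ^ p :=
          Real.rpow_le_rpow hbase0 hbase (by linarith)
      _ = (2/Real.pi)^p * (2 + L)^p := Real.mul_rpow (by positivity) (by linarith)
      _ ≤ (2/Real.pi)^p * (2^(p-1) * (2^p + L^p)) := by
          apply mul_le_mul_of_nonneg_left _ (Real.rpow_nonneg (by positivity) p)
          exact aux_rpow_add_le 2 L (by norm_num) hL0 hp
      _ = (2/Real.pi)^p * 2^(p-1) * (2^p + L^p) := by ring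
  calc (2 / (Real.pi * r) * Real.log ((1 + r) / (1 - r))) ^ p * r
      ≤ (2/Real.pi)^p * 2^(p-1) * (2^p + L^p) * r :=
        mul_le_mul_of_nonneg_right hpow hr0
    _ = (2/Real.pi)^p * 2^(p-1) * 2^p * r
        + (2/Real.pi)^p * 2^(p-1) * (L^p * (1-(1-r))) := by ring

theorem stmt_7 (p : ℝ) (hp : 1 ≤ p) :
    ∫ r in (0 : ℝ)..1,
        (2 / (Real.pi * r) * Real.log ((1 + r) / (1 - r))) ^ p * r ≤
      (4 : ℝ) ^ (p - 1) / Real.pi ^ p *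
        ((2 : ℝ) ^ p + (2 - (2 : ℝ) ^ (-p)) * Real.Gamma (1 + p)) := by
  have hp0 : (0:ℝ) < p := by linarith
  have hπ := Real.pi_pos
  obtain ⟨hGint_Ioo, hGval_Ioo⟩ := aux_G p hp0
  have hGint : IntervalIntegrable (fun s : ℝ => (-Real.log s) ^ p * (1 - s)) volume 0 1 := by
    rw [intervalIntegrable_iff_integrableOn_Ioc_of_le zero_le_one,
        integrableOn_Ioc_iff_integrableOn_Ioo]
    exact hGint_Ioo
  have hGval : ∫ s in (0:ℝ)..1, (-Real.log s) ^ p * (1 - s)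
      = (1 - (1/2) ^ (p+1)) * Real.Gamma (p+1) := by
    rw [intervalIntegral.integral_of_le zero_le_one, integral_Ioc_eq_integral_Ioo]
    exact hGval_Ioo
  have hGcomp : IntervalIntegrable
      (fun r : ℝ => (-Real.log (1-r)) ^ p * r) volume 0 1 := by
    have := hGint.comp_sub_left 1
    norm_num at this
    exact this.symm
  have hg_int : IntervalIntegrable
      (fun r : ℝ => (2/Real.pi)^p * 2^(p-1) * 2^p * r
        + (2/Real.pi)^p * 2^(p-1) * ((-Real.log (1-r))^p * r)) volume 0 1 :=
    ((intervalIntegral.intervalIntegrable_id).const_mul _).add (hGcomp.const_mul _)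
  have hf_int : IntervalIntegrable
      (fun r : ℝ => (2 / (Real.pi * r) * Real.log ((1 + r) / (1 - r))) ^ p * r)
      volume 0 1 := by
    rw [intervalIntegrable_iff_integrableOn_Ioc_of_le zero_le_one]
    refine (hg_int.1).mono' ?_ ?_
    · refine Measurable.aestronglyMeasurable ?_
      have h1 : Measurable fun r : ℝ => 2/(Real.pi*r) * Real.log ((1+r)/(1-r)) :=
        ((measurable_const.div (measurable_const.mul measurable_id)).mul
          (Real.measurable_log.comp ((measurable_const.add measurable_id).div
            (measurable_const.sub measurable_id))))
      exact ((Real.continuous_rpow_const (by linarith)).measurable.comp h1).mul measurable_id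
    · filter_upwards [self_mem_ae_restrict (measurableSet_Ioc :
        MeasurableSet (Ioc (0:ℝ) 1))] with r hr
      have hlog0 : 0 ≤ Real.log ((1 + r) / (1 - r)) := by
        rcases eq_or_lt_of_le hr.2 with h1 | h1
        · rw [← h1]; norm_num
        · apply Real.log_nonneg
          rw [le_div_iff₀ (by linarith)]
          linarith [hr.1]
      have h0 : 0 ≤ (2 / (Real.pi * r) * Real.log ((1 + r) / (1 - r))) ^ p * r :=
        mul_nonneg (Real.rpow_nonneg
          (mul_nonneg (div_nonneg (by norm_num) (mul_nonneg hπ.le hr.1.le)) hlog0) p) hr.1.le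
      rw [Real.norm_eq_abs, abs_of_nonneg h0]
      have := aux_ptwise p hp r (Ioc_subset_Icc_self hr)
      rw [sub_sub_cancel] at this
      exact this
  have hmono := intervalIntegral.integral_mono_on zero_le_one hf_int hg_int
      (fun r hr => by
        have := aux_ptwise p hp r hr
        rwa [sub_sub_cancel] at this)
  have hcompval : ∫ r in (0:ℝ)..1, (-Real.log (1-r))^p * r
      = (1 - (1/2)^(p+1)) * Real.Gamma (p+1) := by
    have h := intervalIntegral.integral_comp_sub_left
        (a := 0) (b := 1) (fun s : ℝ => (-Real.log s) ^ p * (1 - s)) 1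
    norm_num [sub_sub_cancel] at h
    rw [h]
    exact hGval
  have hgval : ∫ r in (0:ℝ)..1,
      ((2/Real.pi)^p * 2^(p-1) * 2^p * r
        + (2/Real.pi)^p * 2^(p-1) * ((-Real.log (1-r))^p * r))
      = (2/Real.pi)^p * 2^(p-1) * 2^p * (1/2)
        + (2/Real.pi)^p * 2^(p-1) * ((1 - (1/2)^(p+1)) * Real.Gamma (p+1)) := by
    rw [intervalIntegral.integral_add ((intervalIntegral.intervalIntegrable_id).const_mul _)
        (hGcomp.const_mul _), intervalIntegral.integral_const_mul,
        intervalIntegral.integral_const_mul, integral_id, hcompval]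
    norm_num
  have halg : (2/Real.pi)^p * 2^(p-1) * 2^p * (1/2)
      + (2/Real.pi)^p * 2^(p-1) * ((1 - (1/2)^(p+1)) * Real.Gamma (p+1))
      = (4:ℝ)^(p-1)/Real.pi^p * ((2:ℝ)^p + (2 - (2:ℝ)^(-p)) * Real.Gamma (1+p)) := by
    have hx : (0:ℝ) < 2^p := Real.rpow_pos_of_pos two_pos p
    have hy : (0:ℝ) < Real.pi^p := Real.rpow_pos_of_pos hπ p
    have hx0 : (2:ℝ)^p ≠ 0 := hx.ne'
    have hy0 : Real.pi^p ≠ 0 := hy.ne'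
    rw [add_comm (1:ℝ) p]
    rw [Real.div_rpow (by norm_num) hπ.le]
    rw [Real.rpow_sub two_pos, Real.rpow_one]
    rw [Real.rpow_sub (by norm_num : (0:ℝ) < 4), Real.rpow_one]
    rw [show (4:ℝ) = 2*2 by norm_num, Real.mul_rpow (by norm_num) (by norm_num)]
    rw [Real.div_rpow (by norm_num) (by norm_num : (0:ℝ) ≤ 2), Real.one_rpow,
        Real.rpow_add two_pos, Real.rpow_one]
    rw [Real.rpow_neg (by norm_num : (0:ℝ) ≤ 2)]
    field_simp
  calc ∫ r in (0:ℝ)..1, (2 / (Real.pi * r) * Real.log ((1 + r) / (1 - r))) ^ p * r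
      ≤ ∫ r in (0:ℝ)..1, ((2/Real.pi)^p * 2^(p-1) * 2^p * r
          + (2/Real.pi)^p * 2^(p-1) * ((-Real.log (1-r))^p * r)) := hmono
    _ = _ := hgval.trans halg
end

section
/- Let F(e^{it}) = |sin t|. Then its Poisson extension w = P[F] satisfies, for 0 < r < 1, w(r) = ((1-r²)/(π r))·log((1+r)/(1-r)), i.e., ∫₀^{2π} (1/(2π))·(1-r²)/(1 - 2r·cos t + r²)·|sin t| dt = ((1-r²)/(π r))·log((1+r)/(1-r)). -/
open Real intervalIntegral

theorem stmt_12 (r : ℝ) (hr : r ∈ Set.Ioo (0 : ℝ) 1) :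
    ∫ t in (0 : ℝ)..(2 * Real.pi),
        (1 / (2 * Real.pi)) * (1 - r ^ 2) * |Real.sin t| /
          (1 - 2 * r * Real.cos t + r ^ 2) =
      (1 - r ^ 2) / (Real.pi * r) * Real.log ((1 + r) / (1 - r)) := by
  obtain ⟨hr0, hr1⟩ := hr
  have hπ := Real.pi_pos
  set c : ℝ := (1 / (2 * Real.pi)) * (1 - r ^ 2) with hc
  have hD : ∀ t : ℝ, 0 < 1 - 2 * r * Real.cos t + r ^ 2 := by
    intro t
    nlinarith [Real.cos_le_one t, sq_nonneg (1 - r)]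
  -- derivative fact
  have hder : ∀ (k : ℝ) (t : ℝ), HasDerivAt
      (fun t => k * Real.log (1 - 2 * r * Real.cos t + r ^ 2))
      (k * (2 * r * Real.sin t) / (1 - 2 * r * Real.cos t + r ^ 2)) t := by
    intro k t
    have h1 : HasDerivAt (fun t => 1 - 2 * r * Real.cos t + r ^ 2)
        (2 * r * Real.sin t) t := by
      have := (((Real.hasDerivAt_cos t).const_mul (2 * r)).const_sub 1).add_const (r ^ 2)
      exact this.congr_deriv (by ring)
    have h2 := (h1.log (hD t).ne').const_mul k
    exact h2.congr_deriv (by ring)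
  have hcont : ∀ a b : ℝ, IntervalIntegrable
      (fun t => c * |Real.sin t| / (1 - 2 * r * Real.cos t + r ^ 2))
      MeasureTheory.volume a b := by
    intro a b
    apply Continuous.intervalIntegrable
    exact Continuous.div (by continuity) (by continuity) (fun t => (hD t).ne')
  have hcont2 : ∀ (k : ℝ) (a b : ℝ), IntervalIntegrable
      (fun t => k * (2 * r * Real.sin t) / (1 - 2 * r * Real.cos t + r ^ 2))
      MeasureTheory.volume a b := by
    intro k a b
    apply Continuous.intervalIntegrable
    exact Continuous.div (by continuity) (by continuity) (fun t => (hD t).ne')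
  have hr1' : (0:ℝ) < 1 - r := by linarith
  have hr1'' : (0:ℝ) < 1 + r := by linarith
  -- first piece
  have I1 : ∫ t in (0:ℝ)..Real.pi, c * |Real.sin t| / (1 - 2 * r * Real.cos t + r ^ 2)
      = c / (2 * r) * (Real.log ((1 + r) ^ 2) - Real.log ((1 - r) ^ 2)) := by
    have heq : Set.EqOn (fun t => c * |Real.sin t| / (1 - 2 * r * Real.cos t + r ^ 2))
        (fun t => (c / (2 * r)) * (2 * r * Real.sin t) / (1 - 2 * r * Real.cos t + r ^ 2))
        (Set.uIcc (0:ℝ) Real.pi) := by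
      intro t ht
      rw [Set.uIcc_of_le hπ.le] at ht
      have hs := Real.sin_nonneg_of_nonneg_of_le_pi ht.1 ht.2
      simp only
      rw [abs_of_nonneg hs]
      field_simp [hr0.ne', (hD t).ne']
    rw [intervalIntegral.integral_congr heq,
      intervalIntegral.integral_eq_sub_of_hasDerivAt (fun t _ => hder (c / (2 * r)) t)
        (hcont2 _ _ _)]
    have e1 : 1 - 2 * r * Real.cos Real.pi + r ^ 2 = (1 + r) ^ 2 := by
      rw [Real.cos_pi]; ring
    have e2 : 1 - 2 * r * Real.cos 0 + r ^ 2 = (1 - r) ^ 2 := by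
      rw [Real.cos_zero]; ring
    rw [e1, e2]; ring
  -- second piece
  have I2 : ∫ t in Real.pi..(2 * Real.pi), c * |Real.sin t| / (1 - 2 * r * Real.cos t + r ^ 2)
      = c / (2 * r) * (Real.log ((1 + r) ^ 2) - Real.log ((1 - r) ^ 2)) := by
    have heq : Set.EqOn (fun t => c * |Real.sin t| / (1 - 2 * r * Real.cos t + r ^ 2))
        (fun t => (-(c / (2 * r))) * (2 * r * Real.sin t) / (1 - 2 * r * Real.cos t + r ^ 2))
        (Set.uIcc Real.pi (2 * Real.pi)) := by
      intro t ht
      rw [Set.uIcc_of_le (by linarith)] at ht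
      have hs : Real.sin t ≤ 0 := by
        have h1 : 0 ≤ Real.sin (t - Real.pi) :=
          Real.sin_nonneg_of_nonneg_of_le_pi (by linarith [ht.1]) (by linarith [ht.2])
        rw [Real.sin_sub_pi] at h1
        linarith
      simp only
      rw [abs_of_nonpos hs]
      field_simp [hr0.ne', (hD t).ne']
    rw [intervalIntegral.integral_congr heq,
      intervalIntegral.integral_eq_sub_of_hasDerivAt (fun t _ => hder (-(c / (2 * r))) t)
        (hcont2 _ _ _)]
    have e1 : 1 - 2 * r * Real.cos (2 * Real.pi) + r ^ 2 = (1 - r) ^ 2 := by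
      rw [Real.cos_two_pi]; ring
    have e2 : 1 - 2 * r * Real.cos Real.pi + r ^ 2 = (1 + r) ^ 2 := by
      rw [Real.cos_pi]; ring
    rw [e1, e2]; ring
  have split : ∫ t in (0:ℝ)..(2 * Real.pi), c * |Real.sin t| / (1 - 2 * r * Real.cos t + r ^ 2)
      = (∫ t in (0:ℝ)..Real.pi, c * |Real.sin t| / (1 - 2 * r * Real.cos t + r ^ 2))
        + ∫ t in Real.pi..(2 * Real.pi), c * |Real.sin t| / (1 - 2 * r * Real.cos t + r ^ 2) :=
    (intervalIntegral.integral_add_adjacent_intervals (hcont _ _) (hcont _ _)).symm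
  have key : (∫ t in (0 : ℝ)..(2 * Real.pi),
        (1 / (2 * Real.pi)) * (1 - r ^ 2) * |Real.sin t| /
          (1 - 2 * r * Real.cos t + r ^ 2))
      = ∫ t in (0:ℝ)..(2 * Real.pi), c * |Real.sin t| / (1 - 2 * r * Real.cos t + r ^ 2) := by
    rfl
  rw [key, split, I1, I2]
  rw [Real.log_div hr1''.ne' hr1'.ne', Real.log_pow, Real.log_pow]
  have : Real.pi ≠ 0 := hπ.ne'
  rw [hc]
  field_simp
  ring
end

section
/- Suppose 1 ≤ p < ∞ and w = P[F] with F absolutely continuous on the unit circle and Ḟ ∈ L^p(0,2π). Then for each 0 < r < 1, ∫₀^{2π} |∂_r w(re^{iθ})|^p dθ ≤ 2π·‖Ḟ‖_{L^p}^p · I(r)^p, where I(r) = (2/(π r))·log((1+r)/(1-r)). -/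
open MeasureTheory intervalIntegral Real Set

noncomputable def s15D (r s : ℝ) : ℝ := 1 - 2 * r * Real.cos s + r ^ 2

noncomputable def s15g (r s : ℝ) : ℝ := (1 / Real.pi) * Real.sin s / s15D r s

noncomputable def s15Pr (r s : ℝ) : ℝ :=
  (1 / Real.pi) * ((1 + r ^ 2) * Real.cos s - 2 * r) / (s15D r s) ^ 2

lemma s15D_pos {r : ℝ} (hr0 : 0 ≤ r) (hr1 : r < 1) (s : ℝ) : 0 < s15D r s := by
  have h1 := Real.cos_le_one s
  have h2 := Real.neg_one_le_cos s
  unfold s15D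
  nlinarith [sq_nonneg (1 - r), sq_nonneg (1 + r)]

lemma s15D_ge {r : ℝ} (hr0 : 0 ≤ r) (s : ℝ) : (1 - r) ^ 2 ≤ s15D r s := by
  have h1 := Real.cos_le_one s
  unfold s15D; nlinarith

lemma s15D_per (r s : ℝ) : s15D r (s + 2 * Real.pi) = s15D r s := by
  unfold s15D; rw [Real.cos_add_two_pi]

lemma s15g_per (r s : ℝ) : s15g r (s + 2 * Real.pi) = s15g r s := by
  unfold s15g; rw [Real.sin_add_two_pi, s15D_per]

lemma s15g_hasDeriv {r : ℝ} (hr0 : 0 ≤ r) (hr1 : r < 1) (s : ℝ) :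
    HasDerivAt (s15g r) (s15Pr r s) s := by
  have hD : s15D r s ≠ 0 := (s15D_pos hr0 hr1 s).ne'
  have h1 : HasDerivAt (fun s => (1 / Real.pi) * Real.sin s) ((1 / Real.pi) * Real.cos s) s :=
    (Real.hasDerivAt_sin s).const_mul _
  have h2 : HasDerivAt (fun s => s15D r s) (2 * r * Real.sin s) s := by
    have : HasDerivAt (fun s => 1 - 2 * r * Real.cos s + r ^ 2)
        (0 - 2 * r * (-Real.sin s) + 0) s := by
      exact (((hasDerivAt_const s 1).sub ((Real.hasDerivAt_cos s).const_mul (2*r))).add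
        (hasDerivAt_const s (r^2)))
    exact this.congr_deriv (by ring)
  have := h1.div h2 hD
  refine this.congr_deriv (Eq.symm ?_)
  have hnum : 1 / Real.pi * Real.cos s * s15D r s - 1 / Real.pi * Real.sin s * (2 * r * Real.sin s)
      = (1 / Real.pi) * ((1 + r ^ 2) * Real.cos s - 2 * r) := by
    unfold s15D
    linear_combination (-(2 * r / Real.pi)) * Real.sin_sq_add_cos_sq s
  rw [hnum]
  unfold s15Pr
  rw [mul_div_assoc]

lemma s15P_hasDeriv {ρ : ℝ} (h0 : 0 ≤ ρ) (h1 : ρ < 1) (s : ℝ) :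
    HasDerivAt (fun x => (1 / (2 * Real.pi)) * (1 - x ^ 2) / s15D x s) (s15Pr ρ s) ρ := by
  have hD : s15D ρ s ≠ 0 := (s15D_pos h0 h1 s).ne'
  have h1' : HasDerivAt (fun x : ℝ => (1 / (2 * Real.pi)) * (1 - x ^ 2))
      ((1 / (2 * Real.pi)) * (-(2 * ρ))) ρ := by
    have : HasDerivAt (fun x : ℝ => 1 - x ^ 2) (-(2 * ρ)) ρ := by
      exact ((hasDerivAt_const ρ (1:ℝ)).sub (hasDerivAt_pow 2 ρ)).congr_deriv (by norm_num)
    exact this.const_mul _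
  have h2 : HasDerivAt (fun x => s15D x s) (-2 * Real.cos s + 2 * ρ) ρ := by
    have : HasDerivAt (fun x : ℝ => 1 - 2 * x * Real.cos s + x ^ 2)
        (0 - 2 * Real.cos s + 2 * ρ) ρ := by
      have ha : HasDerivAt (fun x : ℝ => 2 * x * Real.cos s) (2 * Real.cos s) ρ := by
        simpa [mul_comm, mul_assoc] using
          ((hasDerivAt_id ρ).const_mul (2 * Real.cos s)).congr_deriv (by ring)
      exact (((hasDerivAt_const ρ (1:ℝ)).sub ha).add (hasDerivAt_pow 2 ρ)).congr_deriv
        (by norm_num)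
    exact this.congr_deriv (by ring)
  have := h1'.div h2 hD
  refine this.congr_deriv (Eq.symm ?_)
  have hDe : s15D ρ s = 1 - 2 * ρ * Real.cos s + ρ ^ 2 := rfl
  unfold s15Pr
  rw [eq_div_iff (pow_ne_zero 2 hD), div_mul_eq_mul_div, div_eq_iff (pow_ne_zero 2 hD)]
  rw [hDe]
  have hpi : Real.pi ≠ 0 := Real.pi_ne_zero
  field_simp
  ring

lemma s15log_hasDeriv {r : ℝ} (hr0 : 0 < r) (hr1 : r < 1) (s : ℝ) :
    HasDerivAt (fun s => (1 / (2 * Real.pi * r)) * Real.log (s15D r s)) (s15g r s) s := by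
  have hD : s15D r s ≠ 0 := (s15D_pos hr0.le hr1 s).ne'
  have h2 : HasDerivAt (fun s => s15D r s) (2 * r * Real.sin s) s := by
    have : HasDerivAt (fun s => 1 - 2 * r * Real.cos s + r ^ 2)
        (0 - 2 * r * (-Real.sin s) + 0) s :=
      (((hasDerivAt_const s 1).sub ((Real.hasDerivAt_cos s).const_mul (2*r))).add
        (hasDerivAt_const s (r^2)))
    exact this.congr_deriv (by ring)
  have := (h2.log hD).const_mul (1 / (2 * Real.pi * r))
  refine this.congr_deriv (Eq.symm ?_)
  unfold s15g
  field_simp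

/-- The norm of `s15g`. -/
lemma s15g_abs_le {r : ℝ} (hr0 : 0 ≤ r) (hr1 : r < 1) (s : ℝ) :
    |s15g r s| ≤ 1 / (Real.pi * (1 - r) ^ 2) := by
  have hD := s15D_pos hr0 hr1 s
  have hDg := s15D_ge hr0 s
  have h1r : (0:ℝ) < (1 - r) ^ 2 := by nlinarith
  have hpi := Real.pi_pos
  unfold s15g
  rw [abs_div, abs_mul, abs_of_pos hD]
  rw [div_le_div_iff₀ hD (mul_pos hpi h1r)]
  have h1 : |1 / Real.pi| = 1 / Real.pi := abs_of_pos (by positivity)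
  have h2 : |Real.sin s| ≤ 1 := abs_sin_le_one s
  calc |1 / Real.pi| * |Real.sin s| * (Real.pi * (1 - r) ^ 2)
      ≤ (1 / Real.pi) * 1 * (Real.pi * (1 - r) ^ 2) := by
        rw [h1]; apply mul_le_mul_of_nonneg_right _ (by positivity)
        exact mul_le_mul_of_nonneg_left h2 (by positivity)
    _ = 1 * (1 - r) ^ 2 := by field_simp
    _ ≤ 1 * s15D r s := by nlinarith

lemma s15D_cont (r : ℝ) : Continuous (fun s => s15D r s) := by
  unfold s15D; continuity

lemma s15g_cont {r : ℝ} (hr0 : 0 ≤ r) (hr1 : r < 1) : Continuous (s15g r) := by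
  unfold s15g
  exact (continuous_const.mul Real.continuous_sin).div (s15D_cont r)
    (fun s => (s15D_pos hr0 hr1 s).ne')

lemma s15g_reflect (r x : ℝ) : s15g r (2 * Real.pi - x) = - s15g r x := by
  unfold s15g s15D
  rw [show (2 * Real.pi - x) = -x + 2*Real.pi by ring, Real.sin_add_two_pi, Real.cos_add_two_pi,
    Real.sin_neg, Real.cos_neg]
  ring

lemma s15intg {r : ℝ} (hr0 : 0 < r) (hr1 : r < 1) :
    ∫ s in (0:ℝ)..Real.pi, s15g r s
      = (1 / (Real.pi * r)) * Real.log ((1 + r) / (1 - r)) := by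
  have h := intervalIntegral.integral_eq_sub_of_hasDerivAt
    (a := (0:ℝ)) (b := Real.pi)
    (f := fun s => (1 / (2 * Real.pi * r)) * Real.log (s15D r s)) (f' := s15g r)
    (fun s _ => s15log_hasDeriv hr0 hr1 s)
    ((s15g_cont hr0.le hr1).intervalIntegrable 0 Real.pi)
  rw [h]
  have hD0 : s15D r 0 = (1 - r) ^ 2 := by unfold s15D; rw [Real.cos_zero]; ring
  have hDpi : s15D r Real.pi = (1 + r) ^ 2 := by unfold s15D; rw [Real.cos_pi]; ring
  rw [hD0, hDpi, Real.log_pow, Real.log_pow,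
    Real.log_div (by linarith) (by linarith)]
  have hpi := Real.pi_pos
  field_simp
  ring

lemma s15intabs {r : ℝ} (hr0 : 0 < r) (hr1 : r < 1) :
    ∫ s in (0:ℝ)..(2 * Real.pi), |s15g r s|
      = 2 / (Real.pi * r) * Real.log ((1 + r) / (1 - r)) := by
  have hpi := Real.pi_pos
  have hcont : Continuous (fun s => |s15g r s|) := (s15g_cont hr0.le hr1).abs
  have h1 : ∫ s in (0:ℝ)..Real.pi, |s15g r s| = ∫ s in (0:ℝ)..Real.pi, s15g r s := by
    apply intervalIntegral.integral_congr
    intro s hs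
    rw [Set.uIcc_of_le (by linarith)] at hs
    apply abs_of_nonneg
    unfold s15g
    apply div_nonneg _ (s15D_pos hr0.le hr1 s).le
    exact mul_nonneg (by positivity) (Real.sin_nonneg_of_nonneg_of_le_pi hs.1 hs.2)
  have h2 : ∫ s in Real.pi..(2 * Real.pi), |s15g r s|
      = ∫ s in (0:ℝ)..Real.pi, |s15g r s| := by
    have h := intervalIntegral.integral_comp_sub_left
      (a := (0:ℝ)) (b := Real.pi) (fun s => |s15g r s|) (2 * Real.pi)
    have hr : ∀ x : ℝ, |s15g r (2 * Real.pi - x)| = |s15g r x| := by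
      intro x; rw [s15g_reflect, abs_neg]
    simp only [hr] at h
    rw [show (2 * Real.pi - Real.pi) = Real.pi by ring, show (2 * Real.pi - 0) = 2*Real.pi by ring] at h
    rw [← h]
  have h3 : ∫ s in (0:ℝ)..(2 * Real.pi), |s15g r s|
      = (∫ s in (0:ℝ)..Real.pi, |s15g r s|) + ∫ s in Real.pi..(2 * Real.pi), |s15g r s| :=
    (intervalIntegral.integral_add_adjacent_intervals
      (hcont.intervalIntegrable _ _) (hcont.intervalIntegrable _ _)).symm
  rw [h3, h2, h1, s15intg hr0 hr1]
  field_simp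
  ring

lemma s15Pr_abs_le {ρ b : ℝ} (h0 : 0 ≤ ρ) (hb : ρ ≤ b) (hb1 : b < 1) (s : ℝ) :
    |s15Pr ρ s| ≤ 4 / (Real.pi * (1 - b) ^ 4) := by
  have hpi := Real.pi_pos
  have hD := s15D_pos h0 (lt_of_le_of_lt hb hb1) s
  have hDg := s15D_ge h0 s
  have hb0 : (0:ℝ) < 1 - b := by linarith
  have hnum : |(1 / Real.pi) * ((1 + ρ ^ 2) * Real.cos s - 2 * ρ)| ≤ 4 / Real.pi := by
    have habs : |(1 + ρ ^ 2) * Real.cos s - 2 * ρ| ≤ 4 := by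
      rw [abs_le]
      constructor <;> nlinarith [Real.cos_le_one s, Real.neg_one_le_cos s]
    rw [abs_mul, abs_of_pos (by positivity : (0:ℝ) < 1 / Real.pi)]
    calc 1 / Real.pi * |(1 + ρ ^ 2) * Real.cos s - 2 * ρ| ≤ 1 / Real.pi * 4 := by
          exact mul_le_mul_of_nonneg_left habs (by positivity)
      _ = 4 / Real.pi := by ring
  have hden : (1 - b) ^ 4 ≤ (s15D ρ s) ^ 2 := by
    calc (1 - b) ^ 4 = ((1 - b) ^ 2) ^ 2 := by ring
      _ ≤ ((1 - ρ) ^ 2) ^ 2 := by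
          apply pow_le_pow_left₀ (by positivity)
          nlinarith
      _ ≤ (s15D ρ s) ^ 2 := by
          apply pow_le_pow_left₀ (by positivity)
          exact hDg
  unfold s15Pr
  rw [abs_div, abs_of_pos (by positivity : (0:ℝ) < (s15D ρ s) ^ 2)]
  calc |(1 / Real.pi) * ((1 + ρ ^ 2) * Real.cos s - 2 * ρ)| / (s15D ρ s) ^ 2
      ≤ (4 / Real.pi) / (s15D ρ s) ^ 2 := by
        apply div_le_div_of_nonneg_right hnum (by positivity)
    _ ≤ (4 / Real.pi) / (1 - b) ^ 4 := by
        apply div_le_div_of_nonneg_left (by positivity) (by positivity) hden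
    _ = 4 / (Real.pi * (1 - b) ^ 4) := by rw [div_div]

lemma s15Pr_cont {r : ℝ} (hr0 : 0 ≤ r) (hr1 : r < 1) (θ : ℝ) :
    Continuous (fun t => s15Pr r (t - θ)) := by
  unfold s15Pr
  apply Continuous.div
  · continuity
  · exact ((s15D_cont r).comp (continuous_id.sub continuous_const)).pow 2
  · exact fun t => pow_ne_zero 2 (s15D_pos hr0 hr1 _).ne'

lemma s15deriv (F : ℝ → ℂ) (hFcont : Continuous F)
    {r : ℝ} (hr0 : 0 < r) (hr1 : r < 1) (θ : ℝ) :
    HasDerivAt (fun ρ : ℝ => ∫ t in (0:ℝ)..(2 * Real.pi),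
        ((1 / (2 * Real.pi)) * (1 - ρ ^ 2) /
          (1 - 2 * ρ * Real.cos (t - θ) + ρ ^ 2) : ℝ) • F t)
      (∫ t in (0:ℝ)..(2 * Real.pi), (s15Pr r (t - θ)) • F t) r := by
  have hpi := Real.pi_pos
  set ε : ℝ := min r (1 - r) / 2 with hε
  have hε_pos : 0 < ε := by
    apply div_pos _ two_pos
    exact lt_min hr0 (by linarith)
  set b : ℝ := (1 + r) / 2 with hb
  have hb1 : b < 1 := by rw [hb]; linarith
  have hball : ∀ x ∈ Metric.ball r ε, 0 < x ∧ x ≤ b := by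
    intro x hx
    rw [Metric.mem_ball, Real.dist_eq, abs_lt] at hx
    have h1 : ε ≤ r / 2 := by
      rw [hε]; have := min_le_left r (1 - r); linarith
    have h2 : ε ≤ (1 - r) / 2 := by
      rw [hε]; have := min_le_right r (1 - r); linarith
    constructor
    · linarith [hx.1]
    · rw [hb]; linarith [hx.2]
  set C : ℝ := 4 / (Real.pi * (1 - b) ^ 4) with hC
  have key := intervalIntegral.hasDerivAt_integral_of_dominated_loc_of_deriv_le
    (μ := volume) (a := 0) (b := 2 * Real.pi) (x₀ := r) (s := Metric.ball r ε)
    (F := fun ρ t => ((1 / (2 * Real.pi)) * (1 - ρ ^ 2) / s15D ρ (t - θ) : ℝ) • F t)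
    (F' := fun ρ t => (s15Pr ρ (t - θ)) • F t)
    (bound := fun t => C * ‖F t‖) (Metric.ball_mem_nhds r hε_pos) ?_ ?_ ?_ ?_ ?_ ?_
  · exact key.2
  · -- measurability of F x near r
    filter_upwards [Metric.ball_mem_nhds r hε_pos] with x hx
    have hx' := hball x hx
    apply Continuous.aestronglyMeasurable
    apply Continuous.fun_smul _ hFcont
    apply Continuous.div continuous_const
      ((s15D_cont x).comp (continuous_id.sub continuous_const))
    exact fun t => (s15D_pos hx'.1.le (lt_of_le_of_lt hx'.2 hb1) _).ne'
  · -- integrability at r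
    apply Continuous.intervalIntegrable
    apply Continuous.fun_smul _ hFcont
    apply Continuous.div continuous_const
      ((s15D_cont r).comp (continuous_id.sub continuous_const))
    exact fun t => (s15D_pos hr0.le hr1 _).ne'
  · exact (((s15Pr_cont hr0.le hr1 θ).smul hFcont)).aestronglyMeasurable
  · -- bound
    apply Filter.Eventually.of_forall
    intro t _ x hx
    have hx' := hball x hx
    rw [norm_smul, Real.norm_eq_abs]
    exact mul_le_mul_of_nonneg_right (s15Pr_abs_le hx'.1.le hx'.2 hb1 _) (norm_nonneg _)
  · exact (continuous_const.mul hFcont.norm).intervalIntegrable _ _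
  · -- differentiability
    apply Filter.Eventually.of_forall
    intro t _ x hx
    have hx' := hball x hx
    exact (s15P_hasDeriv hx'.1.le (lt_of_le_of_lt hx'.2 hb1) (t - θ)).smul_const (F t)

lemma s15g_shift_hasDeriv {r : ℝ} (hr0 : 0 ≤ r) (hr1 : r < 1) (θ t : ℝ) :
    HasDerivAt (fun t => s15g r (t - θ)) (s15Pr r (t - θ)) t := by
  have h := (s15g_hasDeriv hr0 hr1 (t - θ)).comp t ((hasDerivAt_id t).sub_const θ)
  exact h.congr_deriv (mul_one _)

lemma s15g_neg_shift (r θ : ℝ) : s15g r (2 * Real.pi - θ) = s15g r (-θ) := by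
  rw [show 2 * Real.pi - θ = -θ + 2 * Real.pi by ring, s15g_per]

lemma s15intPr (r : ℝ) (hr0 : 0 < r) (hr1 : r < 1) (θ s : ℝ) :
    ∫ t in s..(2 * Real.pi), s15Pr r (t - θ) = s15g r (-θ) - s15g r (s - θ) := by
  rw [intervalIntegral.integral_eq_sub_of_hasDerivAt
    (f := fun t => s15g r (t - θ)) (fun t _ => s15g_shift_hasDeriv hr0.le hr1 θ t)
    ((s15Pr_cont hr0.le hr1 θ).intervalIntegrable _ _), s15g_neg_shift]

lemma s15parts (F F' : ℝ → ℂ)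
    (hF'int : ∀ a b : ℝ, IntervalIntegrable F' MeasureTheory.volume a b)
    (hFac : ∀ t : ℝ, F t = F 0 + ∫ s in (0 : ℝ)..t, F' s)
    (hint0 : ∫ s in (0:ℝ)..(2 * Real.pi), F' s = 0)
    {r : ℝ} (hr0 : 0 < r) (hr1 : r < 1) (θ : ℝ) :
    ∫ t in (0:ℝ)..(2 * Real.pi), (s15Pr r (t - θ)) • F t
      = ∫ t in (0:ℝ)..(2 * Real.pi), (-(s15g r (t - θ))) • F' t := by
  have hpi := Real.pi_pos
  have h2pi : (0:ℝ) ≤ 2 * Real.pi := by linarith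
  set φ : ℝ → ℝ := fun t => s15Pr r (t - θ) with hφ
  have hφcont : Continuous φ := s15Pr_cont hr0.le hr1 θ
  have hprim_cont : Continuous (fun t : ℝ => ∫ s in (0:ℝ)..t, F' s) :=
    intervalIntegral.continuous_primitive hF'int 0
  set μ2 : MeasureTheory.Measure ℝ := volume.restrict (Set.Ioc (0:ℝ) (2 * Real.pi)) with hμ2
  have hF'i : MeasureTheory.Integrable F' μ2 := by
    rw [hμ2, ← MeasureTheory.IntegrableOn]
    exact (intervalIntegrable_iff_integrableOn_Ioc_of_le h2pi).mp (hF'int 0 (2 * Real.pi))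
  have hφi : MeasureTheory.Integrable φ μ2 := by
    rw [hμ2, ← MeasureTheory.IntegrableOn]
    exact hφcont.integrableOn_Ioc
  -- the product function
  set S : Set (ℝ × ℝ) := {p : ℝ × ℝ | p.2 ≤ p.1} with hS
  have hSmeas : MeasurableSet S := measurableSet_le measurable_snd measurable_fst
  set H : ℝ × ℝ → ℂ := S.indicator (fun z => φ z.1 • F' z.2) with hH
  have hHint : MeasureTheory.Integrable H (μ2.prod μ2) :=
    (MeasureTheory.Integrable.smul_prod hφi hF'i).indicator hSmeas
  -- step 1 : kill the constant term
  have hIg : ∫ t in (0:ℝ)..(2 * Real.pi), φ t = 0 := by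
    have := s15intPr r hr0 hr1 θ 0
    rw [hφ, this]
    simp [s15g_neg_shift]
  have step1 : ∫ t in (0:ℝ)..(2 * Real.pi), φ t • F t
      = ∫ t in (0:ℝ)..(2 * Real.pi), φ t • (∫ s in (0:ℝ)..t, F' s) := by
    have hcongr : ∀ t : ℝ, φ t • F t = φ t • (F 0) + φ t • (∫ s in (0:ℝ)..t, F' s) := by
      intro t
      rw [← smul_add, ← hFac t]
    rw [intervalIntegral.integral_congr (g := fun t => φ t • (F 0)
        + φ t • (∫ s in (0:ℝ)..t, F' s)) (fun t _ => hcongr t)]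
    rw [intervalIntegral.integral_add
      ((hφcont.fun_smul continuous_const).intervalIntegrable _ _)
      ((hφcont.fun_smul hprim_cont).intervalIntegrable _ _),
      intervalIntegral.integral_smul_const, hIg]
    simp
  -- step 2 : Fubini
  have inner_eq : ∀ t ∈ Set.Ioc (0:ℝ) (2 * Real.pi),
      φ t • (∫ s in (0:ℝ)..t, F' s) = ∫ s, H (t, s) ∂μ2 := by
    intro t ht
    have h1 : ∫ s in (0:ℝ)..t, F' s = ∫ s in Set.Ioc (0:ℝ) (2 * Real.pi), (Set.Iic t).indicator F' s := by
      rw [MeasureTheory.setIntegral_indicator measurableSet_Iic,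
        intervalIntegral.integral_of_le ht.1.le]
      congr 1
      rw [Set.Ioc_inter_Iic, min_eq_right ht.2]
    rw [h1, ← MeasureTheory.integral_smul]
    apply MeasureTheory.integral_congr_ae
    apply Filter.Eventually.of_forall
    intro s
    simp only [hH, Set.indicator_apply, Set.mem_Iic, Set.mem_setOf_eq]
    by_cases hst : s ≤ t <;> simp [hS, hst]
  have swap : ∫ t, (∫ s, H (t, s) ∂μ2) ∂μ2 = ∫ s, (∫ t, H (t, s) ∂μ2) ∂μ2 :=
    MeasureTheory.integral_integral_swap hHint
  have inner2_eq : ∀ s ∈ Set.Ioc (0:ℝ) (2 * Real.pi),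
      (∫ t, H (t, s) ∂μ2) = (s15g r (-θ) - s15g r (s - θ)) • F' s := by
    intro s hs
    have h1 : ∀ t : ℝ, H (t, s) = ((Set.Ici s).indicator φ t) • F' s := by
      intro t
      simp only [hH, Set.indicator_apply, Set.mem_Ici, Set.mem_setOf_eq]
      by_cases hst : s ≤ t <;> simp [hS, hst]
    simp_rw [h1]
    rw [_root_.integral_smul_const]
    congr 1
    rw [hμ2, MeasureTheory.setIntegral_indicator measurableSet_Ici]
    have h2 : Set.Ioc (0:ℝ) (2 * Real.pi) ∩ Set.Ici s = Set.Icc s (2 * Real.pi) := by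
      ext x
      simp only [Set.mem_inter_iff, Set.mem_Ioc, Set.mem_Ici, Set.mem_Icc]
      constructor
      · rintro ⟨⟨_, hx2⟩, hx3⟩; exact ⟨hx3, hx2⟩
      · rintro ⟨hx1, hx2⟩; exact ⟨⟨lt_of_lt_of_le hs.1 hx1, hx2⟩, hx1⟩
    rw [h2, MeasureTheory.integral_Icc_eq_integral_Ioc,
      ← intervalIntegral.integral_of_le hs.2]
    exact s15intPr r hr0 hr1 θ s
  -- assemble
  rw [intervalIntegral.integral_of_le h2pi, intervalIntegral.integral_of_le h2pi] at *
  rw [step1]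
  rw [MeasureTheory.setIntegral_congr_fun measurableSet_Ioc inner_eq]
  rw [swap]
  rw [MeasureTheory.setIntegral_congr_fun measurableSet_Ioc inner2_eq]
  -- final computation
  have hψi : MeasureTheory.Integrable (fun s => s15g r (s - θ) • F' s) μ2 := by
    have hb := hF'i.bdd_mul
      (f := fun s => ((s15g r (s - θ) : ℝ) : ℂ)) (c := 1 / (Real.pi * (1 - r) ^ 2))
      (Continuous.aestronglyMeasurable (by
        apply Complex.continuous_ofReal.comp
        exact (s15g_cont hr0.le hr1).comp (continuous_id.sub continuous_const)))
      (Filter.Eventually.of_forall fun s => by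
        rw [Complex.norm_real, Real.norm_eq_abs]
        exact s15g_abs_le hr0.le hr1 _)
    apply hb.congr
    apply Filter.Eventually.of_forall
    intro s
    simp [Complex.real_smul]
  have hsub : ∀ s : ℝ, (s15g r (-θ) - s15g r (s - θ)) • F' s
      = s15g r (-θ) • F' s - s15g r (s - θ) • F' s := fun s => sub_smul _ _ _
  simp_rw [hsub]
  have h1 : MeasureTheory.Integrable (fun x => s15g r (-θ) • F' x) μ2 := by
    exact hF'i.smul (s15g r (-θ))
  rw [MeasureTheory.integral_sub h1 hψi]
  rw [MeasureTheory.integral_smul, hint0, smul_zero, zero_sub, ← MeasureTheory.integral_neg]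
  simp_rw [neg_smul]
  rfl

lemma s15g_abs_periodic (r : ℝ) : Function.Periodic (fun s => |s15g r s|) (2 * Real.pi) :=
  fun s => by simp only [s15g_per]

lemma s15intabs_shift_t {r : ℝ} (hr0 : 0 < r) (hr1 : r < 1) (θ : ℝ) :
    ∫ t in (0:ℝ)..(2 * Real.pi), |s15g r (t - θ)|
      = 2 / (Real.pi * r) * Real.log ((1 + r) / (1 - r)) := by
  rw [intervalIntegral.integral_comp_sub_right (fun s => |s15g r s|) θ]
  rw [show (0:ℝ) - θ = -θ by ring, show 2 * Real.pi - θ = -θ + 2 * Real.pi by ring]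
  rw [(s15g_abs_periodic r).intervalIntegral_add_eq (-θ) 0, zero_add]
  exact s15intabs hr0 hr1

lemma s15intabs_shift_θ {r : ℝ} (hr0 : 0 < r) (hr1 : r < 1) (t : ℝ) :
    ∫ θ in (0:ℝ)..(2 * Real.pi), |s15g r (t - θ)|
      = 2 / (Real.pi * r) * Real.log ((1 + r) / (1 - r)) := by
  rw [intervalIntegral.integral_comp_sub_left (fun s => |s15g r s|) t]
  rw [show t - 0 = (t - 2 * Real.pi) + 2 * Real.pi by ring]
  rw [(s15g_abs_periodic r).intervalIntegral_add_eq (t - 2 * Real.pi) 0, zero_add]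
  exact s15intabs hr0 hr1

lemma s15holder {p : ℝ} (hp : 1 ≤ p) (μ : MeasureTheory.Measure ℝ)
    [MeasureTheory.IsFiniteMeasure μ]
    (a : ℝ → ℝ) (ha_cont : Continuous a) (ha_nonneg : ∀ t, 0 ≤ a t)
    (Ca : ℝ) (ha_le : ∀ t, a t ≤ Ca)
    (G : ℝ → ℂ) (hGmeas : MeasureTheory.AEStronglyMeasurable G μ)
    (hGp : MeasureTheory.Integrable (fun t => ‖G t‖ ^ p) μ) :
    (∫ t, a t * ‖G t‖ ∂μ) ^ p ≤ (∫ t, a t ∂μ) ^ (p - 1) * ∫ t, a t * ‖G t‖ ^ p ∂μ := by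
  rcases eq_or_lt_of_le hp with hp1 | hp1
  · subst hp1
    simp [Real.rpow_one]
  -- p > 1
  have hp0 : (0:ℝ) < p := by linarith
  have hpq : p.HolderConjugate (p / (p - 1)) := Real.HolderConjugate.conjExponent hp1
  set q : ℝ := p / (p - 1) with hq
  have hq0 : (0:ℝ) < q := hpq.symm.pos
  have hCa0 : 0 ≤ Ca := le_trans (ha_nonneg 0) (ha_le 0)
  set f : ℝ → ℝ := fun t => a t ^ (1/p) * ‖G t‖ with hf
  set g : ℝ → ℝ := fun t => a t ^ (1/q) with hg
  have hf_nonneg : ∀ t, 0 ≤ f t := fun t =>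
    mul_nonneg (Real.rpow_nonneg (ha_nonneg t) _) (norm_nonneg _)
  have hg_nonneg : ∀ t, 0 ≤ g t := fun t => Real.rpow_nonneg (ha_nonneg t) _
  have hg_cont : Continuous g := ha_cont.rpow_const (fun t => Or.inr (by positivity))
  have hf_meas : MeasureTheory.AEStronglyMeasurable f μ :=
    ((ha_cont.rpow_const (fun t => Or.inr (by positivity))).aestronglyMeasurable).mul
      hGmeas.norm
  -- f ^ p = a * ‖G‖ ^ p
  have hfp : ∀ t, f t ^ p = a t * ‖G t‖ ^ p := by
    intro t
    rw [hf, Real.mul_rpow (Real.rpow_nonneg (ha_nonneg t) _) (norm_nonneg _),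
      ← Real.rpow_mul (ha_nonneg t), one_div_mul_cancel hp0.ne', Real.rpow_one]
  have hgq : ∀ t, g t ^ q = a t := by
    intro t
    rw [hg, ← Real.rpow_mul (ha_nonneg t), one_div_mul_cancel hq0.ne', Real.rpow_one]
  have hfg : ∀ t, f t * g t = a t * ‖G t‖ := by
    intro t
    rw [hf, hg]
    calc a t ^ (1/p) * ‖G t‖ * a t ^ (1/q) = a t ^ (1/p) * a t ^ (1/q) * ‖G t‖ := by ring
      _ = a t ^ (1/p + 1/q) * ‖G t‖ := by
          rw [Real.rpow_add_of_nonneg (ha_nonneg t) (by positivity) (by positivity)]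
      _ = a t * ‖G t‖ := by rw [one_div, one_div, hpq.inv_add_inv_eq_one, Real.rpow_one]
  -- integrability
  have hfp_int : MeasureTheory.Integrable (fun t => a t * ‖G t‖ ^ p) μ :=
    hGp.bdd_mul (c := Ca) ha_cont.aestronglyMeasurable
      (Filter.Eventually.of_forall fun t => by simpa [Real.norm_eq_abs, abs_of_nonneg (ha_nonneg t)] using ha_le t)
  have hfMem : MeasureTheory.MemLp f (ENNReal.ofReal p) μ := by
    have hne0 : ENNReal.ofReal p ≠ 0 := by
      simp [ENNReal.ofReal_eq_zero, not_le, hp0]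
    have hneT : ENNReal.ofReal p ≠ ⊤ := ENNReal.ofReal_ne_top
    apply (MeasureTheory.memLp_norm_rpow_iff hf_meas hne0 hneT).mp
    rw [ENNReal.div_self hne0 hneT, ENNReal.toReal_ofReal hp0.le,
      MeasureTheory.memLp_one_iff_integrable]
    apply hfp_int.congr
    apply Filter.Eventually.of_forall
    intro t
    simp only [Real.norm_eq_abs]
    rw [abs_of_nonneg (hf_nonneg t), hfp t]
  have hgMem : MeasureTheory.MemLp g (ENNReal.ofReal q) μ := by
    apply MeasureTheory.MemLp.of_bound hg_cont.aestronglyMeasurable (Ca ^ (1/q))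
    apply Filter.Eventually.of_forall
    intro t
    simp only [Real.norm_eq_abs]
    rw [abs_of_nonneg (hg_nonneg t)]
    exact Real.rpow_le_rpow (ha_nonneg t) (ha_le t) (by positivity)
  have key := MeasureTheory.integral_mul_le_Lp_mul_Lq_of_nonneg hpq
    (Filter.Eventually.of_forall hf_nonneg) (Filter.Eventually.of_forall hg_nonneg)
    hfMem hgMem
  simp_rw [hfg, hfp, hgq] at key
  -- now key : ∫ a‖G‖ ≤ (∫ a‖G‖^p)^(1/p) * (∫ a)^(1/q)
  have hM0 : 0 ≤ ∫ t, a t * ‖G t‖ ^ p ∂μ :=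
    MeasureTheory.integral_nonneg (fun t => mul_nonneg (ha_nonneg t) (by positivity))
  have hI0 : 0 ≤ ∫ t, a t ∂μ := MeasureTheory.integral_nonneg ha_nonneg
  have hJ0 : 0 ≤ ∫ t, a t * ‖G t‖ ∂μ :=
    MeasureTheory.integral_nonneg (fun t => mul_nonneg (ha_nonneg t) (norm_nonneg _))
  calc (∫ t, a t * ‖G t‖ ∂μ) ^ p
      ≤ ((∫ t, a t * ‖G t‖ ^ p ∂μ) ^ (1/p) * (∫ t, a t ∂μ) ^ (1/q)) ^ p :=
        Real.rpow_le_rpow hJ0 key hp0.le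
    _ = (∫ t, a t ∂μ) ^ (p - 1) * ∫ t, a t * ‖G t‖ ^ p ∂μ := by
        rw [Real.mul_rpow (by positivity) (by positivity),
          ← Real.rpow_mul hM0, ← Real.rpow_mul hI0,
          one_div_mul_cancel hp0.ne', Real.rpow_one]
        rw [show 1/q * p = p / q by ring, hpq.div_conj_eq_sub_one]
        ring


/-- bound for the radial derivative of the Poisson extension of an
absolutely continuous boundary function with `L^p` derivative. -/
theorem stmt_15 (p : ℝ) (hp : 1 ≤ p)
    (F F' : ℝ → ℂ)
    -- `F` is `2π`-periodic
    (hper : Function.Periodic F (2 * Real.pi))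
    -- `F` is absolutely continuous with derivative `F'`:
    (hF'int : ∀ a b : ℝ, IntervalIntegrable F' MeasureTheory.volume a b)
    (hFac : ∀ t : ℝ, F t = F 0 + ∫ s in (0 : ℝ)..t, F' s)
    -- `Ḟ ∈ L^p(0,2π)`:
    (hLp : IntervalIntegrable (fun t => ‖F' t‖ ^ p) MeasureTheory.volume 0 (2 * Real.pi))
    -- `w` is the Poisson extension of `F` and `wr` its radial derivative:
    (w wr : ℝ → ℝ → ℂ)
    (hw : ∀ r θ : ℝ, w r θ =
      ∫ t in (0 : ℝ)..(2 * Real.pi),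
        ((1 / (2 * Real.pi)) * (1 - r ^ 2) /
          (1 - 2 * r * Real.cos (t - θ) + r ^ 2) : ℝ) • F t)
    (hwr : ∀ r θ : ℝ, r ∈ Set.Ioo (0 : ℝ) 1 →
      HasDerivAt (fun ρ => w ρ θ) (wr r θ) r)
    (r : ℝ) (hr : r ∈ Set.Ioo (0 : ℝ) 1) :
    ∫ θ in (0 : ℝ)..(2 * Real.pi), ‖wr r θ‖ ^ p ≤
      2 * Real.pi *
        ((1 / (2 * Real.pi)) * ∫ t in (0 : ℝ)..(2 * Real.pi), ‖F' t‖ ^ p) *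
        (2 / (Real.pi * r) * Real.log ((1 + r) / (1 - r))) ^ p := by
  obtain ⟨hr0, hr1⟩ := hr
  have hpi := Real.pi_pos
  have h2pi : (0:ℝ) ≤ 2 * Real.pi := by linarith
  have hp0 : (0:ℝ) < p := by linarith
  set I : ℝ := 2 / (Real.pi * r) * Real.log ((1 + r) / (1 - r)) with hIdef
  have hIpos : 0 < I := by
    apply mul_pos (by positivity)
    apply Real.log_pos
    rw [lt_div_iff₀ (by linarith)]
    linarith
  -- continuity of F
  have hFcont : Continuous F := by
    have hFeq : F = fun t => F 0 + ∫ s in (0:ℝ)..t, F' s := funext hFac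
    rw [hFeq]
    exact continuous_const.add (intervalIntegral.continuous_primitive hF'int 0)
  -- total integral of F' vanishes
  have hint0 : ∫ s in (0:ℝ)..(2 * Real.pi), F' s = 0 := by
    have h := hFac (2 * Real.pi)
    have h2 := hper 0
    rw [zero_add] at h2
    rw [h2] at h
    linear_combination h.symm
  -- representation of wr
  have hrep : ∀ θ : ℝ, wr r θ
      = ∫ t in (0:ℝ)..(2 * Real.pi), (-(s15g r (t - θ))) • F' t := by
    intro θ
    have hd := s15deriv F hFcont hr0 hr1 θ
    have hw' : (fun ρ => w ρ θ) = fun ρ => ∫ t in (0:ℝ)..(2 * Real.pi),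
        ((1 / (2 * Real.pi)) * (1 - ρ ^ 2) /
          (1 - 2 * ρ * Real.cos (t - θ) + ρ ^ 2) : ℝ) • F t := funext (fun ρ => hw ρ θ)
    have h1 : HasDerivAt (fun ρ => w ρ θ)
        (∫ t in (0:ℝ)..(2 * Real.pi), (s15Pr r (t - θ)) • F t) r := by
      rw [hw']; exact hd
    have h2 := (hwr r θ ⟨hr0, hr1⟩).unique h1
    rw [h2, s15parts F F' hF'int hFac hint0 hr0 hr1 θ]
  -- set up the restricted measure
  set μ2 : MeasureTheory.Measure ℝ := MeasureTheory.volume.restrict (Set.Ioc (0:ℝ) (2 * Real.pi))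
    with hμ2
  haveI : MeasureTheory.IsFiniteMeasure μ2 := by
    constructor
    rw [hμ2, MeasureTheory.Measure.restrict_apply_univ]
    exact measure_Ioc_lt_top
  have hF'i : MeasureTheory.Integrable F' μ2 :=
    (intervalIntegrable_iff_integrableOn_Ioc_of_le h2pi).mp (hF'int 0 (2 * Real.pi))
  have hGp : MeasureTheory.Integrable (fun t => ‖F' t‖ ^ p) μ2 :=
    (intervalIntegrable_iff_integrableOn_Ioc_of_le h2pi).mp hLp
  set Cg : ℝ := 1 / (Real.pi * (1 - r) ^ 2) with hCg
  -- continuity of Φ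
  set Φ : ℝ → ℂ := fun θ => ∫ t in (0:ℝ)..(2 * Real.pi), (-(s15g r (t - θ))) • F' t with hΦ
  have hgc : Continuous (s15g r) := s15g_cont hr0.le hr1
  have hΦcont : Continuous Φ := by
    have h1 : Continuous (fun θ => ∫ t, (-(s15g r (t - θ))) • F' t ∂μ2) := by
      apply MeasureTheory.continuous_of_dominated (bound := fun t => Cg * ‖F' t‖)
      · intro θ
        exact ((hgc.comp (continuous_id.sub continuous_const)).neg.aestronglyMeasurable).smul
          hF'i.1
      · intro θ
        apply Filter.Eventually.of_forall
        intro t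
        rw [norm_smul, Real.norm_eq_abs, abs_neg]
        exact mul_le_mul_of_nonneg_right (s15g_abs_le hr0.le hr1 _) (norm_nonneg _)
      · exact hF'i.norm.const_mul Cg
      · apply Filter.Eventually.of_forall
        intro t
        exact ((hgc.comp (continuous_const.sub continuous_id)).neg).smul continuous_const
    have h2 : Φ = fun θ => ∫ t, (-(s15g r (t - θ))) • F' t ∂μ2 := by
      funext θ
      exact intervalIntegral.integral_of_le h2pi
    rw [h2]
    exact h1
  -- the pointwise bound
  set M : ℝ → ℝ := fun θ => ∫ t, |s15g r (t - θ)| * ‖F' t‖ ^ p ∂μ2 with hM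
  have hpointwise : ∀ θ : ℝ, ‖Φ θ‖ ^ p ≤ I ^ (p - 1) * M θ := by
    intro θ
    set a : ℝ → ℝ := fun t => |s15g r (t - θ)| with ha
    have ha_cont : Continuous a := (hgc.comp (continuous_id.sub continuous_const)).abs
    have ha_nonneg : ∀ t, 0 ≤ a t := fun t => abs_nonneg _
    have ha_le : ∀ t, a t ≤ Cg := fun t => s15g_abs_le hr0.le hr1 _
    have hIa : ∫ t, a t ∂μ2 = I := by
      rw [hμ2, ← intervalIntegral.integral_of_le h2pi]
      exact s15intabs_shift_t hr0 hr1 θ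
    have hnorm : ‖Φ θ‖ ≤ ∫ t, a t * ‖F' t‖ ∂μ2 := by
      rw [hΦ]
      calc ‖∫ t in (0:ℝ)..(2 * Real.pi), (-(s15g r (t - θ))) • F' t‖
          ≤ ∫ t in (0:ℝ)..(2 * Real.pi), ‖(-(s15g r (t - θ))) • F' t‖ :=
            intervalIntegral.norm_integral_le_integral_norm h2pi
        _ = ∫ t in (0:ℝ)..(2 * Real.pi), a t * ‖F' t‖ := by
            apply intervalIntegral.integral_congr
            intro t _
            simp only [norm_smul, Real.norm_eq_abs, abs_neg, ha]
        _ = ∫ t, a t * ‖F' t‖ ∂μ2 := intervalIntegral.integral_of_le h2pi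
    have hJ0 : 0 ≤ ∫ t, a t * ‖F' t‖ ∂μ2 :=
      MeasureTheory.integral_nonneg (fun t => mul_nonneg (ha_nonneg t) (norm_nonneg _))
    calc ‖Φ θ‖ ^ p ≤ (∫ t, a t * ‖F' t‖ ∂μ2) ^ p :=
          Real.rpow_le_rpow (norm_nonneg _) hnorm hp0.le
      _ ≤ (∫ t, a t ∂μ2) ^ (p - 1) * ∫ t, a t * ‖F' t‖ ^ p ∂μ2 :=
          s15holder hp μ2 a ha_cont ha_nonneg Cg ha_le F' hF'i.1 hGp
      _ = I ^ (p - 1) * M θ := by rw [hIa]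
  -- Fubini for the M integral
  have hprodcont : Continuous (fun z : ℝ × ℝ => |s15g r (z.2 - z.1)|) :=
    (hgc.comp (continuous_snd.sub continuous_fst)).abs
  have hb2 : MeasureTheory.Integrable (fun z : ℝ × ℝ => ‖F' z.2‖ ^ p) (μ2.prod μ2) := by
    have := (MeasureTheory.integrable_const (1:ℝ) (μ := μ2)).mul_prod hGp
    simpa using this
  have hGint : MeasureTheory.Integrable
      (fun z : ℝ × ℝ => |s15g r (z.2 - z.1)| * ‖F' z.2‖ ^ p) (μ2.prod μ2) :=
    hb2.bdd_mul (c := Cg) hprodcont.aestronglyMeasurable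
      (Filter.Eventually.of_forall fun z => by
        simp only [Real.norm_eq_abs, abs_abs]
        exact s15g_abs_le hr0.le hr1 _)
  have hM_int : MeasureTheory.Integrable M μ2 := hGint.integral_prod_left
  have hMtotal : ∫ θ, M θ ∂μ2 = I * ∫ t, ‖F' t‖ ^ p ∂μ2 := by
    rw [hM]
    rw [MeasureTheory.integral_integral_swap hGint]
    have hinner : ∀ t : ℝ, (∫ θ, |s15g r (t - θ)| * ‖F' t‖ ^ p ∂μ2)
        = I * ‖F' t‖ ^ p := by
      intro t
      rw [MeasureTheory.integral_mul_const]
      congr 1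
      rw [hμ2, ← intervalIntegral.integral_of_le h2pi]
      exact s15intabs_shift_θ hr0 hr1 t
    simp_rw [hinner]
    rw [MeasureTheory.integral_const_mul]
  -- assemble
  have hwreq : ∀ θ : ℝ, ‖wr r θ‖ ^ p = ‖Φ θ‖ ^ p := fun θ => by rw [hrep θ, hΦ]
  have hmono : ∫ θ in (0:ℝ)..(2 * Real.pi), ‖wr r θ‖ ^ p
      ≤ ∫ θ in (0:ℝ)..(2 * Real.pi), I ^ (p - 1) * M θ := by
    rw [intervalIntegral.integral_congr (g := fun θ => ‖Φ θ‖ ^ p) (fun θ _ => hwreq θ)]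
    apply intervalIntegral.integral_mono_on h2pi
    · exact (hΦcont.norm.rpow_const (fun θ => Or.inr hp0.le)).intervalIntegrable _ _
    · apply IntervalIntegrable.const_mul
      rw [intervalIntegrable_iff_integrableOn_Ioc_of_le h2pi]
      exact hM_int
    · intro θ _
      exact hpointwise θ
  have hfinal : ∫ θ in (0:ℝ)..(2 * Real.pi), I ^ (p - 1) * M θ
      = I ^ p * ∫ t in (0:ℝ)..(2 * Real.pi), ‖F' t‖ ^ p := by
    rw [intervalIntegral.integral_const_mul]
    rw [intervalIntegral.integral_of_le h2pi, intervalIntegral.integral_of_le h2pi]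
    rw [hMtotal]
    rw [← mul_assoc]
    congr 1
    nth_rewrite 2 [← Real.rpow_one I]
    rw [← Real.rpow_add hIpos]
    norm_num
  have hRHS : 2 * Real.pi *
      ((1 / (2 * Real.pi)) * ∫ t in (0 : ℝ)..(2 * Real.pi), ‖F' t‖ ^ p) * I ^ p
      = I ^ p * ∫ t in (0:ℝ)..(2 * Real.pi), ‖F' t‖ ^ p := by
    field_simp
  rw [hRHS]
  rw [← hfinal]
  exact hmono
end
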